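/- In the two-graph Moran process, the probability that the mutant set S reaches fixation with mutant fitness r, mutant graph G_M and resident graph G_R equals 1 minus the probability that the complement set V∖S reaches fixation in the process where the roles are exchanged: resident graph G_M, mutant graph G_R, and mutant fitness 1/r. Formally, f^S_{G_R,G_M}(r) = 1 − f^{V∖S}_{G_M,G_R}(1/r). -/

import Mathlib

open Finset

variable {V : Type*} [Fintype V] [DecidableEq V]

/-- One-step transition probability of the two-graph Moran process with relative fitness `r`,
resident weight matrix `wR` and mutant weight matrix `wM`, from mutant set `S` to set `T`.
An individual is chosen with probability proportional to its fitness (residents `1`,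
mutants `r`) and reproduces on a neighbour in its own graph. -/
noncomputable def moranStep (r : ℝ) (wR wM : V → V → ℝ) (S T : Finset V) : ℝ :=
  ((∑ i ∈ S, ∑ j ∈ Sᶜ, (if T = insert j S then r * wM i j else 0)) +
   (∑ j ∈ Sᶜ, ∑ i ∈ S, (if T = S.erase i then wR j i else 0)) +
   (if T = S then (∑ i ∈ S, ∑ j ∈ S, r * wM i j) + (∑ i ∈ Sᶜ, ∑ j ∈ Sᶜ, wR i j) else 0))
  / (S.card * r + ((Fintype.card V : ℝ) - S.card))

/-- `t`-step transition probabilities of the two-graph Moran process. -/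
noncomputable def moranIter (r : ℝ) (wR wM : V → V → ℝ) : ℕ → Finset V → Finset V → ℝ
  | 0 => fun S T => if T = S then 1 else 0
  | (t + 1) => fun S T => ∑ U : Finset V, moranStep r wR wM S U * moranIter r wR wM t U T

/-- Fixation probability of the two-graph Moran process started from mutant set `S`:
the probability of eventual absorption at the all-mutant state `V` (the probability of
being at the absorbing state `univ` is nondecreasing in `t`, so the limit is the `⨆`). -/
noncomputable def fixProbFrom (r : ℝ) (wR wM : V → V → ℝ) (S : Finset V) : ℝ :=
  ⨆ t : ℕ, moranIter r wR wM t S Finset.univ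

/-- Fixation probability of the two-graph Moran process started from a single
uniformly random mutant. -/
noncomputable def fixProb (r : ℝ) (wR wM : V → V → ℝ) : ℝ :=
  (∑ u : V, fixProbFrom r wR wM {u}) / (Fintype.card V)

/-- A weight matrix is a strongly connected graph structure: positive-weight edges
connect every ordered pair of vertices. -/
def StronglyConnectedW (w : V → V → ℝ) : Prop :=
  ∀ i j : V, Relation.ReflTransGen (fun a b => 0 < w a b) i j

/-- Admissible weight matrix: nonnegative, zero diagonal, rows sum to 1. -/
def IsWeightMatrix (w : V → V → ℝ) : Prop :=
  (∀ i j, 0 ≤ w i j) ∧ (∀ i, w i i = 0) ∧ (∀ i, ∑ j, w i j = 1)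

/-!
Complementing the mutant set while exchanging the two graphs and replacing `r` by `1 / r` maps
the one-step transition probabilities onto each other (multiply numerator and denominator by
`r`), so the dual fixation probability is the extinction probability of the original process.
It remains to show that the original process is absorbed almost surely: `∅` and `V` are
absorbing, and strong connectivity of the mutant graph lets every nonempty mutant set grow to
`V` with positive probability, so the mass outside the absorbing states decays geometrically.
-/

open Filter Topology

lemma Relation.ReflTransGen.exists_leaving {α : Type*} {ρ : α → α → Prop} {p : α → Prop}
    {a b : α} (h : Relation.ReflTransGen ρ a b) (ha : p a) (hb : ¬ p b) :
    ∃ c d, p c ∧ ¬ p d ∧ ρ c d := by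
  induction h with
  | refl => exact absurd ha hb
  | @tail c d _ hcd ih =>
    by_cases hc : p c
    · exact ⟨c, d, hc, hb, hcd⟩
    · exact ih hc

lemma tendsto_zero_of_antitone_of_le_mul_shift {q : ℕ → ℝ} (hq : Antitone q)
    (hq0 : ∀ t, 0 ≤ q t) {N : ℕ} (hN : N ≠ 0) {c : ℝ} (hc0 : 0 ≤ c) (hc1 : c < 1)
    (hcontr : ∀ t, q (t + N) ≤ c * q t) : Tendsto q atTop (𝓝 0) := by
  have hdecay : ∀ k, q (k * N) ≤ c ^ k * q 0 := by
    intro k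
    induction k with
    | zero => simp
    | succ k ih =>
      calc q ((k + 1) * N) = q (k * N + N) := by rw [add_mul, one_mul]
        _ ≤ c * q (k * N) := hcontr _
        _ ≤ c * (c ^ k * q 0) := by gcongr
        _ = c ^ (k + 1) * q 0 := by ring
  have hlim : Tendsto (fun t => c ^ (t / N) * q 0) atTop (𝓝 0) := by
    simpa using ((tendsto_pow_atTop_nhds_zero_of_lt_one hc0 hc1).comp
      (Nat.tendsto_div_const_atTop hN)).mul_const (q 0)
  exact tendsto_of_tendsto_of_tendsto_of_le_of_le tendsto_const_nhds hlim hq0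
    fun t => (hq (Nat.div_mul_le_self t N)).trans (hdecay _)

namespace Matrix

variable {ι : Type*} [Fintype ι] [DecidableEq ι] {P : Matrix ι ι ℝ}

def IsAbsorbingState (P : Matrix ι ι ℝ) (a : ι) : Prop :=
  ∀ j, P a j = if j = a then 1 else 0

lemma IsAbsorbingState.pow {a : ι} (ha : P.IsAbsorbingState a) (t : ℕ) :
    (P ^ t).IsAbsorbingState a := by
  induction t with
  | zero => intro j; simp [one_apply, eq_comm]
  | succ t ih => intro j; simp [pow_succ', mul_apply, ha _, ih j]

lemma IsAbsorbingState.monotone_pow_apply (hP : P ∈ rowStochastic ℝ ι) {a : ι}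
    (ha : P.IsAbsorbingState a) (i : ι) : Monotone fun t => (P ^ t) i a := by
  refine monotone_nat_of_le_succ fun t => ?_
  rw [pow_succ, mul_apply]
  calc (P ^ t) i a = (P ^ t) i a * P a a := by rw [ha a, if_pos rfl, mul_one]
    _ ≤ ∑ j, (P ^ t) i j * P j a :=
      single_le_sum (f := fun j => (P ^ t) i j * P j a)
        (fun j _ => mul_nonneg (nonneg_of_mem_rowStochastic (pow_mem hP t))
          (nonneg_of_mem_rowStochastic hP)) (mem_univ a)

lemma sum_add_sum_compl_pow_apply (hP : P ∈ rowStochastic ℝ ι) (A : Finset ι) (t : ℕ)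
    (i : ι) : ∑ a ∈ A, (P ^ t) i a + ∑ j ∈ Aᶜ, (P ^ t) i j = 1 := by
  rw [sum_add_sum_compl, sum_row_of_mem_rowStochastic (pow_mem hP t)]

lemma exists_pos_le_sum_pow_apply (hP : P ∈ rowStochastic ℝ ι) [Nonempty ι] {A : Finset ι}
    (hA : ∀ a ∈ A, P.IsAbsorbingState a) (hreach : ∀ i, ∃ t, ∃ a ∈ A, 0 < (P ^ t) i a) :
    ∃ N ≠ 0, ∃ ε > 0, ∀ i, ε ≤ ∑ a ∈ A, (P ^ N) i a := by
  choose T a haA hpos using hreach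
  set N := univ.sup T + 1
  have hreachN : ∀ i, 0 < ∑ a ∈ A, (P ^ N) i a := fun i =>
    calc 0 < (P ^ T i) i (a i) := hpos i
      _ ≤ (P ^ N) i (a i) := (hA _ (haA i)).monotone_pow_apply hP i
          ((le_sup (f := T) (mem_univ i)).trans (Nat.le_succ _))
      _ ≤ ∑ a ∈ A, (P ^ N) i a :=
          single_le_sum (f := fun a => (P ^ N) i a)
            (fun _ _ => nonneg_of_mem_rowStochastic (pow_mem hP N)) (haA i)
  obtain ⟨k, hk⟩ := Finite.exists_min fun i => ∑ a ∈ A, (P ^ N) i a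
  exact ⟨N, Nat.succ_ne_zero _, _, hreachN k, hk⟩

lemma sum_compl_pow_add_le (hP : P ∈ rowStochastic ℝ ι) {A : Finset ι}
    (hA : ∀ a ∈ A, P.IsAbsorbingState a) {N : ℕ} {ε : ℝ}
    (hε : ∀ i, ε ≤ ∑ a ∈ A, (P ^ N) i a) (t : ℕ) (i : ι) :
    ∑ j ∈ Aᶜ, (P ^ (t + N)) i j ≤ (1 - ε) * ∑ j ∈ Aᶜ, (P ^ t) i j := by
  have hstay : ∀ k ∈ A, ∑ j ∈ Aᶜ, (P ^ N) k j = 0 := fun k hk =>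
    sum_eq_zero fun j hj => by
      rw [(hA k hk).pow N j, if_neg (ne_of_mem_of_not_mem hk (mem_compl.1 hj)).symm]
  have hleave : ∀ k, ∑ j ∈ Aᶜ, (P ^ N) k j ≤ 1 - ε := fun k => by
    linarith [sum_add_sum_compl_pow_apply hP A N k, hε k]
  calc ∑ j ∈ Aᶜ, (P ^ (t + N)) i j = ∑ k, (P ^ t) i k * ∑ j ∈ Aᶜ, (P ^ N) k j := by
        simp only [pow_add, mul_apply, mul_sum]
        exact sum_comm
    _ = ∑ k ∈ Aᶜ, (P ^ t) i k * ∑ j ∈ Aᶜ, (P ^ N) k j := by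
        rw [← sum_add_sum_compl A, sum_eq_zero fun k hk => by rw [hstay k hk, mul_zero],
          zero_add]
    _ ≤ ∑ k ∈ Aᶜ, (P ^ t) i k * (1 - ε) := by
        gcongr with k
        exact nonneg_of_mem_rowStochastic (pow_mem hP t)
        exact hleave k
    _ = (1 - ε) * ∑ j ∈ Aᶜ, (P ^ t) i j := by rw [← sum_mul, mul_comm]

theorem tendsto_sum_pow_apply_absorbing (hP : P ∈ rowStochastic ℝ ι) {A : Finset ι}
    (hA : ∀ a ∈ A, P.IsAbsorbingState a) (hreach : ∀ i, ∃ t, ∃ a ∈ A, 0 < (P ^ t) i a)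
    (i : ι) : Tendsto (fun t => ∑ a ∈ A, (P ^ t) i a) atTop (𝓝 1) := by
  have : Nonempty ι := ⟨i⟩
  obtain ⟨N, hN, ε, hε0, hε⟩ := exists_pos_le_sum_pow_apply hP hA hreach
  have hmass := sum_add_sum_compl_pow_apply hP A
  have hmono : Monotone fun t => ∑ a ∈ A, (P ^ t) i a := fun s t hst =>
    sum_le_sum fun a ha => (hA a ha).monotone_pow_apply hP i hst
  have hq0 : ∀ t, 0 ≤ ∑ j ∈ Aᶜ, (P ^ t) i j := fun t =>
    sum_nonneg fun _ _ => nonneg_of_mem_rowStochastic (pow_mem hP t)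
  have hε1 : ε ≤ 1 := by linarith [hε i, hmass N i, hq0 N]
  have hq : Tendsto (fun t => ∑ j ∈ Aᶜ, (P ^ t) i j) atTop (𝓝 0) :=
    tendsto_zero_of_antitone_of_le_mul_shift
      (fun s t hst => by linarith [hmass s i, hmass t i, hmono hst]) hq0 hN
      (by linarith) (by linarith) (sum_compl_pow_add_le hP hA hε · i)
  simpa [← fun t => eq_sub_of_add_eq (hmass t i)] using
    (tendsto_const_nhds (x := (1 : ℝ))).sub hq

theorem sum_iSup_pow_apply_absorbing (hP : P ∈ rowStochastic ℝ ι) {A : Finset ι}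
    (hA : ∀ a ∈ A, P.IsAbsorbingState a) (hreach : ∀ i, ∃ t, ∃ a ∈ A, 0 < (P ^ t) i a)
    (i : ι) : ∑ a ∈ A, ⨆ t, (P ^ t) i a = 1 :=
  tendsto_nhds_unique
    (tendsto_finsetSum A fun a ha => tendsto_atTop_ciSup ((hA a ha).monotone_pow_apply hP i)
      ⟨1, Set.forall_mem_range.2 fun _ => le_one_of_mem_rowStochastic (pow_mem hP _)⟩)
    (tendsto_sum_pow_apply_absorbing hP hA hreach i)

end Matrix

lemma card_mul_add_card_sub_card_pos {α : Type*} [Fintype α] [Nonempty α] {r : ℝ} (hr : 0 < r)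
    (S : Finset α) : 0 < (S.card : ℝ) * r + ((Fintype.card α : ℝ) - S.card) := by
  rcases S.eq_empty_or_nonempty with rfl | hS
  · simpa using Fintype.card_pos
  · have : (S.card : ℝ) ≤ Fintype.card α := mod_cast card_le_univ S
    have : (0 : ℝ) < S.card := mod_cast hS.card_pos
    positivity

section Moran

variable {r : ℝ} {wR wM : V → V → ℝ}

noncomputable def moranMatrix (r : ℝ) (wR wM : V → V → ℝ) :
    Matrix (Finset V) (Finset V) ℝ :=
  Matrix.of (moranStep r wR wM)

lemma moranIter_eq_moranMatrix_pow (t : ℕ) (S T : Finset V) :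
    moranIter r wR wM t S T = (moranMatrix r wR wM ^ t) S T := by
  induction t generalizing S with
  | zero => simp [moranIter, Matrix.one_apply, eq_comm]
  | succ t ih => simp [moranIter, pow_succ', Matrix.mul_apply, ih, moranMatrix]

lemma moranStep_nonneg [Nonempty V] (hr : 0 < r) (hwR : IsWeightMatrix wR)
    (hwM : IsWeightMatrix wM) (S T : Finset V) : 0 ≤ moranStep r wR wM S T := by
  have hR := hwR.1
  have hM := hwM.1
  have hrM : ∀ i j, 0 ≤ r * wM i j := fun i j => mul_nonneg hr.le (hM i j)
  unfold moranStep
  refine div_nonneg ?_ (card_mul_add_card_sub_card_pos hr S).le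
  exact add_nonneg
    (add_nonneg (sum_nonneg fun i _ => sum_nonneg fun j _ => ite_nonneg (hrM i j) le_rfl)
      (sum_nonneg fun j _ => sum_nonneg fun i _ => ite_nonneg (hR j i) le_rfl))
    (ite_nonneg (add_nonneg (sum_nonneg fun i _ => sum_nonneg fun j _ => hrM i j)
      (sum_nonneg fun i _ => sum_nonneg fun j _ => hR i j)) le_rfl)

lemma sum_moranStep [Nonempty V] (hr : 0 < r) (hwR : IsWeightMatrix wR)
    (hwM : IsWeightMatrix wM) (S : Finset V) : ∑ T, moranStep r wR wM S T = 1 := by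
  unfold moranStep
  rw [← sum_div, div_eq_one_iff_eq (card_mul_add_card_sub_card_pos hr S).ne']
  have hM : ∑ i ∈ S, ∑ j ∈ Sᶜ, r * wM i j + ∑ i ∈ S, ∑ j ∈ S, r * wM i j
      = S.card * r := by
    rw [← sum_add_distrib, sum_congr rfl fun i _ => by
      rw [sum_compl_add_sum, ← mul_sum, hwM.2.2 i, mul_one], sum_const, nsmul_eq_mul]
  have hR : ∑ j ∈ Sᶜ, ∑ i ∈ S, wR j i + ∑ i ∈ Sᶜ, ∑ j ∈ Sᶜ, wR i j
      = (Fintype.card V : ℝ) - S.card := by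
    simp [← sum_add_distrib, sum_add_sum_compl, hwR.2.2, card_compl,
      Nat.cast_sub (card_le_univ S)]
  have hswap : ∀ (s t : Finset V) (g : V → V → Finset V) (f : V → V → ℝ),
      ∑ T, ∑ i ∈ s, ∑ j ∈ t, (if T = g i j then f i j else 0)
        = ∑ i ∈ s, ∑ j ∈ t, f i j := by
    intro s t g f
    rw [sum_comm]
    refine sum_congr rfl fun i _ => ?_
    rw [sum_comm]
    simp
  rw [sum_add_distrib, sum_add_distrib, hswap, hswap, sum_ite_eq' univ S, if_pos (mem_univ S)]
  linarith

lemma moranMatrix_mem_rowStochastic [Nonempty V] (hr : 0 < r) (hwR : IsWeightMatrix wR)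
    (hwM : IsWeightMatrix wM) : moranMatrix r wR wM ∈ Matrix.rowStochastic ℝ (Finset V) :=
  Matrix.mem_rowStochastic_iff_sum.2
    ⟨moranStep_nonneg hr hwR hwM, sum_moranStep hr hwR hwM⟩

lemma isAbsorbingState_moranMatrix_univ [Nonempty V] (hr : 0 < r) (hwM : IsWeightMatrix wM) :
    (moranMatrix r wR wM).IsAbsorbingState univ := by
  intro T
  have : ∑ i : V, ∑ j : V, r * wM i j = Fintype.card V * r := by
    simp [← mul_sum, hwM.2.2, mul_comm]
  have hn : (0 : ℝ) < Fintype.card V := mod_cast Fintype.card_pos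
  simp only [moranMatrix, Matrix.of_apply, moranStep, compl_univ, sum_empty, sum_const_zero,
    add_zero, zero_add, card_univ, sub_self, this]
  split_ifs
  · field_simp
  · simp

lemma isAbsorbingState_moranMatrix_empty [Nonempty V] (hwR : IsWeightMatrix wR) :
    (moranMatrix r wR wM).IsAbsorbingState ∅ := by
  intro T
  have hn : (0 : ℝ) < Fintype.card V := mod_cast Fintype.card_pos
  simp only [moranMatrix, Matrix.of_apply, moranStep, compl_empty, sum_empty, zero_add,
    card_empty]
  split_ifs <;> simp [hwR.2.2, hn.ne']

lemma moranStep_insert_pos [Nonempty V] (hr : 0 < r) (hwR : IsWeightMatrix wR)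
    (hwM : IsWeightMatrix wM) {U : Finset V} {i j : V} (hi : i ∈ U) (hj : j ∉ U)
    (hij : 0 < wM i j) : 0 < moranStep r wR wM U (insert j U) := by
  have hR := hwR.1
  have hrM : ∀ i j, 0 ≤ r * wM i j := fun i j => mul_nonneg hr.le (hwM.1 i j)
  unfold moranStep
  refine div_pos (add_pos_of_pos_of_nonneg (add_pos_of_pos_of_nonneg ?_ ?_) ?_)
    (card_mul_add_card_sub_card_pos hr U)
  · exact sum_pos' (fun a _ => sum_nonneg fun b _ => ite_nonneg (hrM a b) le_rfl)
      ⟨i, hi, sum_pos' (fun b _ => ite_nonneg (hrM i b) le_rfl)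
        ⟨j, mem_compl.2 hj, by simpa using mul_pos hr hij⟩⟩
  · exact sum_nonneg fun a _ => sum_nonneg fun b _ => ite_nonneg (hR a b) le_rfl
  · exact ite_nonneg (add_nonneg (sum_nonneg fun a _ => sum_nonneg fun b _ => hrM a b)
      (sum_nonneg fun a _ => sum_nonneg fun b _ => hR a b)) le_rfl

lemma exists_moranMatrix_pow_univ_pos [Nonempty V] (hr : 0 < r) (hwR : IsWeightMatrix wR)
    (hwM : IsWeightMatrix wM) (hscM : StronglyConnectedW wM) {U : Finset V} (hU : U.Nonempty) :
    ∃ t, 0 < (moranMatrix r wR wM ^ t) U univ := by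
  induction h : Uᶜ.card generalizing U with
  | zero => exact ⟨0, by simp [(compl_eq_empty_iff U).1 (card_eq_zero.1 h)]⟩
  | succ k ih =>
    obtain ⟨b, hb⟩ := card_pos.1 (by rw [h]; exact k.succ_pos)
    obtain ⟨i, j, hi, hj, hij⟩ :=
      (hscM hU.choose b).exists_leaving hU.choose_spec (mem_compl.1 hb)
    obtain ⟨t, ht⟩ := ih (insert_nonempty j U) (by
      rw [compl_insert, card_erase_of_mem (mem_compl.2 hj), h, Nat.add_sub_cancel])
    refine ⟨t + 1, ?_⟩
    have hP := moranMatrix_mem_rowStochastic hr hwR hwM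
    rw [pow_succ', Matrix.mul_apply]
    exact sum_pos' (fun W _ => mul_nonneg (Matrix.nonneg_of_mem_rowStochastic hP)
        (Matrix.nonneg_of_mem_rowStochastic (pow_mem hP t)))
      ⟨insert j U, mem_univ _, mul_pos (moranStep_insert_pos hr hwR hwM hi hj hij) ht⟩

lemma moranStep_compl (hr : r ≠ 0) (S T : Finset V) :
    moranStep (1 / r) wM wR Sᶜ Tᶜ = moranStep r wR wM S T := by
  unfold moranStep
  rw [show ∀ (N d : ℝ), N / d = (r * N) / (r * d) from
    fun N d => (mul_div_mul_left N d hr).symm]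
  congr 1
  · simp only [compl_compl, ← compl_erase, ← compl_insert, compl_inj_iff]
    simp only [mul_add, mul_sum, mul_ite, mul_zero, one_div, mul_inv_cancel_left₀ hr]
    congr 1
    · ring
    · split_ifs <;> ring
  · rw [card_compl, Nat.cast_sub (card_le_univ S)]
    field_simp
    ring

lemma moranIter_compl (hr : r ≠ 0) (t : ℕ) (S T : Finset V) :
    moranIter (1 / r) wM wR t Sᶜ Tᶜ = moranIter r wR wM t S T := by
  induction t generalizing S with
  | zero => simp only [moranIter, compl_inj_iff]
  | succ t ih =>
    simp only [moranIter]
    rw [← Equiv.sum_comp (compl_involutive (α := Finset V)).toPerm]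
    simp only [Function.Involutive.coe_toPerm, moranStep_compl hr, ih]

end Moran

theorem moran_duality_general
    {V : Type*} [Fintype V] [DecidableEq V] [Nonempty V]
    (r : ℝ) (hr : 0 < r) (wR wM : V → V → ℝ)
    (hwR : IsWeightMatrix wR) (hwM : IsWeightMatrix wM)
    (hscM : StronglyConnectedW wM)
    (S : Finset V) :
    fixProbFrom r wR wM S = 1 - fixProbFrom (1 / r) wM wR Sᶜ := by
  have hreach : ∀ U, ∃ t, ∃ A ∈ ({univ, ∅} : Finset (Finset V)),
      0 < (moranMatrix r wR wM ^ t) U A := fun U => by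
    rcases U.eq_empty_or_nonempty with rfl | hU
    · exact ⟨0, ∅, by simp⟩
    · obtain ⟨t, ht⟩ := exists_moranMatrix_pow_univ_pos hr hwR hwM hscM hU
      exact ⟨t, univ, by simp, ht⟩
  have habsorb := Matrix.sum_iSup_pow_apply_absorbing (moranMatrix_mem_rowStochastic hr hwR hwM)
    (by simpa using ⟨isAbsorbingState_moranMatrix_univ hr hwM,
      isAbsorbingState_moranMatrix_empty hwR⟩) hreach S
  have hextinct : fixProbFrom (1 / r) wM wR Sᶜ = ⨆ t, (moranMatrix r wR wM ^ t) S ∅ := by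
    simp only [fixProbFrom, ← compl_empty, moranIter_compl hr.ne', moranIter_eq_moranMatrix_pow]
  rw [sum_pair univ_nonempty.ne_empty] at habsorb
  rw [hextinct, fixProbFrom]
  simp only [moranIter_eq_moranMatrix_pow]
  linarith

/-- **Duality of the two-graph Moran process.** The probability that mutant set `S` reaches
fixation with mutant fitness `r`, mutant graph `wM` and resident graph `wR` equals one
minus the fixation probability of the complement set `V ∖ S` in the process with the roles
exchanged: resident graph `wM`, mutant graph `wR`, mutant fitness `1/r`. -/
theorem moran_duality
    {V : Type*} [Fintype V] [DecidableEq V] [Nonempty V]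
    (r : ℝ) (hr : 0 < r) (wR wM : V → V → ℝ)
    (hwR : IsWeightMatrix wR) (hwM : IsWeightMatrix wM)
    (hscR : StronglyConnectedW wR) (hscM : StronglyConnectedW wM)
    (S : Finset V) :
    fixProbFrom r wR wM S = 1 - fixProbFrom (1 / r) wM wR Sᶜ :=
  moran_duality_general r hr wR wM hwR hwM hscM S
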